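/- arXiv:2504.18908 — 5 statements merged into one kernel-verified Lean document; each statement's English description precedes it below -/
import Mathlib

section
/- For a polynomial f in Z_p[x_1,...,x_d], let N_m be the number of solutions of f ≡ 0 in (Z/p^m Z)^d, let P_f(t) = Σ_{m≥0} N_m (p^{-d} t)^m, and let Z_f(s) = ∫_{Z_p^d} |f(x)|_p^s dμ with t = p^{-s}. Then P_f(t) = (1 - t Z_f(s)) / (1 - t). -/
/-!
Write `t = p^{-s}` and `B_m = {x | ‖f x‖ ≤ p^{-m}}`. Since `‖y‖ ≤ p^{-m}` exactly when `y ≡ 0` mod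
`p^m`, the set `B_m` is the preimage of the zeros of `f mod p^m` under the reduction
`ℤ_p^d → (ℤ/p^m)^d`; the fibres of this surjective additive map are translates of its kernel, so
they all have measure `p^{-md}` and `μ(B_m) = N_m p^{-md}`. On the other hand `‖y‖^s = t^{v(y)}`,
so summing the geometric series `∑_{m ≤ v(y)} t^m` gives the pointwise identity
`∑_m t^m 1_{B_m} = (1 - t ‖f‖^s) / (1 - t)`, which integrates term by term (dominated by `∑ t^m`).
-/

open MeasureTheory

variable {p : ℕ} [Fact p.Prime]

noncomputable instance : MeasurableSpace ℤ_[p] := borel _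
instance : BorelSpace ℤ_[p] := ⟨rfl⟩

theorem AddMonoidHom.preimage_singleton_eq_preimage_ker {G H : Type*} [AddGroup G] [AddGroup H]
    (φ : G →+ H) (y : G) : φ ⁻¹' {φ y} = (-y + ·) ⁻¹' φ.ker := by
  ext x
  rw [Set.mem_preimage, Set.mem_preimage, SetLike.mem_coe, AddMonoidHom.mem_ker, map_add, map_neg,
    neg_add_eq_zero, Set.mem_singleton_iff, eq_comm]

theorem AddMonoidHom.measure_preimage_eq_card_div_card {G H : Type*} [AddGroup G]
    [MeasurableSpace G] [MeasurableAdd G] [AddGroup H] [Finite H] (μ : Measure G)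
    [IsProbabilityMeasure μ] [μ.IsAddLeftInvariant] (φ : G →+ H)
    (hφ : Function.Surjective φ) (hker : MeasurableSet (φ.ker : Set G)) (Z : Set H) :
    μ (φ ⁻¹' Z) = Nat.card Z / Nat.card H := by
  have hfiber : ∀ z, μ (φ ⁻¹' {z}) = μ (φ.ker : Set G) := fun z => by
    obtain ⟨y, rfl⟩ := hφ z
    rw [φ.preimage_singleton_eq_preimage_ker, measure_preimage_add]
  have hfiber_meas : ∀ z, MeasurableSet (φ ⁻¹' {z}) := fun z => by
    obtain ⟨y, rfl⟩ := hφ z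
    rw [φ.preimage_singleton_eq_preimage_ker]
    exact measurable_const_add (-y) hker
  have hpre : ∀ Z : Set H, μ (φ ⁻¹' Z) = Nat.card Z * μ (φ.ker : Set G) := fun Z => by
    rw [← Z.toFinite.coe_toFinset, ← sum_measure_preimage_singleton _ fun z _ => hfiber_meas z]
    simp [hfiber, Set.ncard_eq_toFinset_card Z Z.toFinite]
  have hker_eq : μ (φ.ker : Set G) = (Nat.card H : ENNReal)⁻¹ := by
    have hone := hpre Set.univ
    rw [Set.preimage_univ, measure_univ, Nat.card_univ] at hone
    exact ENNReal.eq_inv_of_mul_eq_one_left (by rw [mul_comm, hone])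
  rw [hpre, hker_eq, div_eq_mul_inv]

namespace PadicInt

theorem toZModPow_eq_zero_iff {x : ℤ_[p]} {m : ℕ} :
    toZModPow m x = 0 ↔ ‖x‖ ≤ (p : ℝ) ^ (-m : ℤ) := by
  rw [norm_le_pow_iff_mem_span_pow, ← ker_toZModPow, RingHom.mem_ker]

theorem measurableSet_ker_compLeft_toZModPow (ι : Type*) [Countable ι] (m : ℕ) :
    MeasurableSet (((toZModPow (p := p) m).compLeft ι).toAddMonoidHom.ker : Set (ι → ℤ_[p])) := by
  have hker : (((toZModPow (p := p) m).compLeft ι).toAddMonoidHom.ker : Set (ι → ℤ_[p]))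
      = ⋂ i, (fun x => x i) ⁻¹' {y | ‖y‖ ≤ (p : ℝ) ^ (-m : ℤ)} := by
    ext x
    simp [funext_iff, toZModPow_eq_zero_iff]
  rw [hker]
  exact .iInter fun i => measurable_pi_apply i (measurableSet_le measurable_norm measurable_const)

theorem norm_rpow_eq_pow_valuation {z : ℤ_[p]} (hz : z ≠ 0) (s : ℝ) :
    ‖z‖ ^ s = ((p : ℝ) ^ (-s)) ^ z.valuation := by
  have hp : (0 : ℝ) ≤ p := Nat.cast_nonneg p
  rw [norm_eq_zpow_neg_valuation hz, ← Real.rpow_intCast, ← Real.rpow_mul hp,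
    ← Real.rpow_natCast, ← Real.rpow_mul hp]
  push_cast
  ring_nf

theorem norm_le_zpow_neg_iff_le_valuation {z : ℤ_[p]} (hz : z ≠ 0) (k : ℕ) :
    ‖z‖ ≤ (p : ℝ) ^ (-k : ℤ) ↔ k ≤ z.valuation := by
  have hp : (1 : ℝ) < p := by exact_mod_cast (Fact.out : p.Prime).one_lt
  rw [norm_eq_zpow_neg_valuation hz, zpow_le_zpow_iff_right₀ hp]
  omega

theorem hasSum_geometric_of_norm_le_zpow (z : ℤ_[p]) {s : ℝ} (hs : 0 < s) :
    HasSum (fun k : ℕ => if ‖z‖ ≤ (p : ℝ) ^ (-k : ℤ) then ((p : ℝ) ^ (-s)) ^ k else 0)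
      ((1 - (p : ℝ) ^ (-s) * ‖z‖ ^ s) / (1 - (p : ℝ) ^ (-s))) := by
  set t := (p : ℝ) ^ (-s) with ht
  have ht0 : 0 ≤ t := Real.rpow_nonneg (Nat.cast_nonneg p) _
  have ht1 : t < 1 := Real.rpow_lt_one_of_one_lt_of_neg
    (by exact_mod_cast (Fact.out : p.Prime).one_lt) (neg_lt_zero.mpr hs)
  rcases eq_or_ne z 0 with rfl | hz
  · simp only [norm_zero, Real.zero_rpow hs.ne', mul_zero, sub_zero, one_div]
    simpa [zpow_nonneg] using hasSum_geometric_of_lt_one ht0 ht1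
  have hle : ∀ k, k ∈ Finset.range (z.valuation + 1) ↔ ‖z‖ ≤ (p : ℝ) ^ (-k : ℤ) := fun k => by
    rw [norm_le_zpow_neg_iff_le_valuation hz, Finset.mem_range, Nat.lt_succ_iff]
  have hsupp : ∀ k ∉ Finset.range (z.valuation + 1),
      (if ‖z‖ ≤ (p : ℝ) ^ (-k : ℤ) then t ^ k else 0) = 0 := fun k hk => if_neg (mt (hle k).2 hk)
  convert hasSum_sum_of_ne_finset_zero (L := SummationFilter.unconditional ℕ) hsupp using 1
  rw [Finset.sum_congr rfl fun k hk => if_pos ((hle k).1 hk), geom_sum_eq ht1.ne,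
    norm_rpow_eq_pow_valuation hz, ← ht, pow_succ', ← neg_div_neg_eq, neg_sub, neg_sub]

theorem hasSum_measureReal_norm_le_mul_pow {X : Type*} [MeasurableSpace X] (μ : Measure X)
    [IsProbabilityMeasure μ] {g : X → ℤ_[p]} (hg : Measurable g) {s : ℝ} (hs : 0 < s) :
    HasSum (fun k : ℕ => μ.real {x | ‖g x‖ ≤ (p : ℝ) ^ (-k : ℤ)} * ((p : ℝ) ^ (-s)) ^ k)
      ((1 - (p : ℝ) ^ (-s) * ∫ x, ‖g x‖ ^ s ∂μ) / (1 - (p : ℝ) ^ (-s))) := by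
  have ht0 : 0 ≤ (p : ℝ) ^ (-s) := Real.rpow_nonneg (Nat.cast_nonneg p) _
  have ht1 : (p : ℝ) ^ (-s) < 1 := Real.rpow_lt_one_of_one_lt_of_neg
    (by exact_mod_cast (Fact.out : p.Prime).one_lt) (neg_lt_zero.mpr hs)
  have hB : ∀ k : ℕ, MeasurableSet {x | ‖g x‖ ≤ (p : ℝ) ^ (-k : ℤ)} := fun k =>
    measurableSet_le hg.norm measurable_const
  have hint : Integrable (fun x => ‖g x‖ ^ s) μ :=
    Integrable.of_bound (hg.norm.pow_const s).aestronglyMeasurable 1 (ae_of_all μ fun x => by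
      rw [Real.norm_of_nonneg (by positivity)]
      exact Real.rpow_le_one (norm_nonneg _) (norm_le_one _) hs.le)
  have hbound : ∀ (k : ℕ) x, ‖{x | ‖g x‖ ≤ (p : ℝ) ^ (-k : ℤ)}.indicator
      (fun _ => ((p : ℝ) ^ (-s)) ^ k) x‖ ≤ ((p : ℝ) ^ (-s)) ^ k := fun k x => by
    rw [Set.indicator_apply]
    split_ifs <;> simp [abs_of_nonneg, ht0]
  have hsum := hasSum_integral_of_dominated_convergence (μ := μ)
    (fun k _ => ((p : ℝ) ^ (-s)) ^ k) (fun k => aestronglyMeasurable_const.indicator (hB k))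
    (fun k => ae_of_all μ (hbound k))
    (ae_of_all μ fun _ => summable_geometric_of_lt_one ht0 ht1) (integrable_const _)
    (ae_of_all μ fun x => by
      simpa only [Set.indicator_apply, Set.mem_ofPred_eq] using
        hasSum_geometric_of_norm_le_zpow (g x) hs)
  rwa [integral_div, integral_sub (integrable_const _) (hint.const_mul _), integral_const,
    integral_const_mul, probReal_univ, one_smul, funext fun k =>
      integral_indicator_const _ (hB k), funext fun k => smul_eq_mul _ _] at hsum

end PadicInt

open MvPolynomial PadicInt in
theorem MvPolynomial.measureReal_norm_eval_le_eq_card_div {ι : Type*} [Fintype ι]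
    (μ : Measure (ι → ℤ_[p])) [IsProbabilityMeasure μ] [μ.IsAddLeftInvariant]
    (f : MvPolynomial ι ℤ_[p]) (m : ℕ) :
    μ.real {x | ‖eval x f‖ ≤ (p : ℝ) ^ (-m : ℤ)} =
      Nat.card {z : ι → ZMod (p ^ m) // eval z (map (toZModPow m) f) = 0} /
        ((p : ℝ) ^ m) ^ Fintype.card ι := by
  set φ := ((toZModPow (p := p) m).compLeft ι).toAddMonoidHom
  have hset : {x | ‖eval x f‖ ≤ (p : ℝ) ^ (-m : ℤ)} =
      φ ⁻¹' {z | eval z (map (toZModPow m) f) = 0} := by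
    ext x
    change _ ↔ eval (toZModPow m ∘ x) (map (toZModPow m) f) = 0
    rw [eval_map, ← eval₂_comp, toZModPow_eq_zero_iff]
    exact Iff.rfl
  rw [measureReal_def, hset, φ.measure_preimage_eq_card_div_card μ
    (ZMod.ringHom_surjective (toZModPow m)).comp_left (measurableSet_ker_compLeft_toZModPow ι m),
    ENNReal.toReal_div, ENNReal.toReal_natCast, ENNReal.toReal_natCast, Nat.card_fun,
    Nat.card_zmod, Nat.card_eq_fintype_card (α := ι)]
  push_cast
  rfl

/-- `P_f(t) = (1 - t Z_f(s))/(1 - t)`, where `N_m` is the number of zeros of `f` in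
`(ℤ/p^m ℤ)^d`, `t = p^{-s}`, and `Z_f(s) = ∫_{ℤ_p^d} |f(x)|_p^s dμ` with `μ` the Haar
measure normalized so that `μ(ℤ_p^d) = 1`. -/
theorem poincare_series_eq (d : ℕ) (μ : Measure (Fin d → ℤ_[p]))
    [IsProbabilityMeasure μ] [μ.IsAddLeftInvariant]
    (f : MvPolynomial (Fin d) ℤ_[p]) (s : ℝ) (hs : 0 < s) :
    ∑' m : ℕ, (Nat.card {x : Fin d → ZMod (p ^ m) //
        MvPolynomial.eval x (MvPolynomial.map (PadicInt.toZModPow m) f) = 0} : ℝ) *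
        ((p : ℝ) ^ (-(d : ℝ)) * (p : ℝ) ^ (-s)) ^ m =
      (1 - (p : ℝ) ^ (-s) * ∫ x, ‖MvPolynomial.eval x f‖ ^ s ∂μ) /
        (1 - (p : ℝ) ^ (-s)) := by
  have hterm : ∀ m : ℕ, (Nat.card {x : Fin d → ZMod (p ^ m) //
        MvPolynomial.eval x (MvPolynomial.map (PadicInt.toZModPow m) f) = 0} : ℝ) *
        ((p : ℝ) ^ (-(d : ℝ)) * (p : ℝ) ^ (-s)) ^ m =
      μ.real {x | ‖MvPolynomial.eval x f‖ ≤ (p : ℝ) ^ (-m : ℤ)} * ((p : ℝ) ^ (-s)) ^ m := by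
    intro m
    rw [MvPolynomial.measureReal_norm_eval_le_eq_card_div, Fintype.card_fin, mul_pow, ← mul_assoc,
      div_eq_mul_inv, Real.rpow_neg (Nat.cast_nonneg p), Real.rpow_natCast, inv_pow, ← pow_mul,
      ← pow_mul, mul_comm d m]
  rw [tsum_congr hterm]
  exact (PadicInt.hasSum_measureReal_norm_le_mul_pow μ
    (MvPolynomial.continuous_eval f).measurable hs).tsum_eq
end

section
/- For an odd prime p, Igusa's local zeta function of f(x_2, x_3) = x_3^2 − x_2^2 over Z_p equals Z_f(s) = ((1 − p^{-1}) / (1 − p^{-1-s}))^2. -/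
/-!
As `2` is a unit in `ℤ_p`, the map `(x, y) ↦ (y + x, y - x)` is a surjective additive
endomorphism of `ℤ_p²`, hence preserves its Haar probability measure, and it turns `y² - x²`
into the product `uv`. Since that Haar measure is the square of the one of `ℤ_p`, the zeta
function is the square of `∫ ‖x‖ ^ s`. The latter is a geometric series: `ℤ_p \ {0}` is the
disjoint union of the spheres `‖x‖ = p⁻ⁿ`, of measure `(1 - p⁻¹) p⁻ⁿ` because the ball of radius
`p⁻ⁿ` is the kernel of reduction modulo `pⁿ`.
-/

open MeasureTheory

variable {p : ℕ} [Fact p.Prime]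

open Measure TopologicalSpace Function Metric

namespace MeasureTheory.Measure

section CompactAddGroup

variable {G H : Type*} [AddGroup G] [TopologicalSpace G] [IsTopologicalAddGroup G] [CompactSpace G]
  [MeasurableSpace G] [BorelSpace G]

instance isProbabilityMeasure_addHaarMeasure_top :
    IsProbabilityMeasure (addHaarMeasure (⊤ : PositiveCompacts G)) :=
  ⟨by simpa using addHaarMeasure_self (K₀ := (⊤ : PositiveCompacts G))⟩

lemma isAddHaarMeasure_of_compactSpace (μ : Measure G) [IsFiniteMeasure μ] [NeZero μ]
    [μ.IsAddLeftInvariant] : μ.IsAddHaarMeasure :=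
  isAddHaarMeasure_of_isCompact_nonempty_interior μ Set.univ isCompact_univ (by simp)
    (by simpa using NeZero.ne μ) (measure_ne_top μ _)

lemma eq_of_isAddLeftInvariant_of_isProbabilityMeasure (μ ν : Measure G)
    [IsProbabilityMeasure μ] [IsProbabilityMeasure ν] [μ.IsAddLeftInvariant]
    [ν.IsAddLeftInvariant] : μ = ν :=
  have := isAddHaarMeasure_of_compactSpace μ
  have := isAddHaarMeasure_of_compactSpace ν
  isAddHaarMeasure_eq_of_isProbabilityMeasure μ ν

lemma measurePreserving_of_isAddLeftInvariant {M : Type*} [AddGroup M] [MeasurableSpace M]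
    [MeasurableAdd M] (φ : M →+ G) (hφ : Measurable φ) (hφs : Surjective φ) (μ : Measure M)
    (ν : Measure G) [IsProbabilityMeasure μ] [μ.IsAddLeftInvariant] [IsProbabilityMeasure ν]
    [ν.IsAddLeftInvariant] : MeasurePreserving φ μ ν := by
  refine ⟨hφ, ?_⟩
  have := isProbabilityMeasure_map (μ := μ) hφ.aemeasurable
  have := isAddLeftInvariant_map φ.toAddHom hφ hφs (μ := μ)
  exact eq_of_isAddLeftInvariant_of_isProbabilityMeasure _ _

variable [AddGroup H] [TopologicalSpace H] [IsTopologicalAddGroup H] [CompactSpace H]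
  [MeasurableSpace H] [BorelSpace H]

lemma eq_prod_of_isAddLeftInvariant [SecondCountableTopologyEither G H] (μ : Measure (G × H))
    (ν : Measure G) (ρ : Measure H) [IsProbabilityMeasure μ] [μ.IsAddLeftInvariant]
    [IsProbabilityMeasure ν] [ν.IsAddLeftInvariant] [IsProbabilityMeasure ρ]
    [ρ.IsAddLeftInvariant] : μ = ν.prod ρ :=
  eq_of_isAddLeftInvariant_of_isProbabilityMeasure _ _

end CompactAddGroup

end MeasureTheory.Measure

section SumDiff

variable (R : Type*) [CommRing R]

def sumDiff : R × R →+ R × R :=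
  (AddMonoidHom.snd R R + AddMonoidHom.fst R R).prod (AddMonoidHom.snd R R - AddMonoidHom.fst R R)

variable {R}

@[simp]
lemma sumDiff_apply (z : R × R) : sumDiff R z = (z.2 + z.1, z.2 - z.1) := rfl

lemma sumDiff_surjective (h2 : IsUnit (2 : R)) : Surjective (sumDiff R) := by
  rintro ⟨u, v⟩
  obtain ⟨c, hc⟩ := h2.exists_left_inv
  refine ⟨(c * (u - v), c * (u + v)), ?_⟩
  simp only [sumDiff_apply, Prod.mk.injEq]
  exact ⟨by linear_combination u * hc, by linear_combination v * hc⟩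

lemma measurable_sumDiff [MeasurableSpace R] [MeasurableAdd₂ R] [MeasurableSub₂ R] :
    Measurable (sumDiff R) :=
  (measurable_snd.add measurable_fst).prodMk (measurable_snd.sub measurable_fst)

end SumDiff

lemma Real.zpow_neg_mul_rpow {x : ℝ} (hx : 0 < x) (n : ℕ) (s : ℝ) :
    x ^ (-n : ℤ) * (x ^ (-n : ℤ)) ^ s = (x ^ (-1 - s)) ^ n := by
  rw [← Real.rpow_intCast, ← Real.rpow_mul hx.le, ← Real.rpow_add hx, ← Real.rpow_mul_natCast hx.le]
  push_cast
  ring_nf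

namespace PadicInt

lemma isUnit_two (hp : p ≠ 2) : IsUnit (2 : ℤ_[p]) := by
  rw [isUnit_iff, ← Nat.cast_ofNat, norm_natCast_eq_one_iff,
    Nat.coprime_primes Fact.out Nat.prime_two]
  exact hp

lemma closedBall_zero_pow_eq_ker (n : ℕ) :
    closedBall (0 : ℤ_[p]) ((p : ℝ) ^ (-n : ℤ)) = (toZModPow (p := p) n).toAddMonoidHom.ker := by
  ext x
  rw [mem_closedBall_zero_iff, norm_le_pow_iff_mem_span_pow, ← ker_toZModPow]
  rfl

lemma index_ker_toZModPow (n : ℕ) : (toZModPow (p := p) n).toAddMonoidHom.ker.index = p ^ n := by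
  rw [AddSubgroup.index_ker, AddMonoidHom.range_eq_top.mpr (ZMod.ringHom_surjective _)]
  simp

variable (ν : Measure ℤ_[p]) [IsProbabilityMeasure ν] [ν.IsAddLeftInvariant]

lemma measureReal_closedBall_zero_pow (n : ℕ) :
    ν.real (closedBall 0 ((p : ℝ) ^ (-n : ℤ))) = (p : ℝ) ^ (-n : ℤ) := by
  have hindex := AddSubgroup.index_mul_measure (toZModPow (p := p) n).toAddMonoidHom.ker
    (by rw [← closedBall_zero_pow_eq_ker]; exact measurableSet_closedBall) ν
  rw [index_ker_toZModPow, ← closedBall_zero_pow_eq_ker, measure_univ] at hindex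
  rw [measureReal_def, ENNReal.eq_inv_of_mul_eq_one_left ((mul_comm _ _).trans hindex)]
  simp

lemma sphere_zero_pow_eq_sdiff (n : ℕ) :
    sphere (0 : ℤ_[p]) ((p : ℝ) ^ (-n : ℤ)) =
      closedBall 0 ((p : ℝ) ^ (-n : ℤ)) \ closedBall 0 ((p : ℝ) ^ (-(n + 1 : ℕ) : ℤ)) := by
  ext x
  have h := norm_lt_pow_iff_norm_le_pow_sub_one x (-n)
  rw [show -(n : ℤ) - 1 = -(n + 1 : ℕ) by push_cast; ring] at h
  rw [mem_sphere_zero_iff_norm, Set.mem_sdiff, mem_closedBall_zero_iff, mem_closedBall_zero_iff,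
    ← h, not_lt, le_antisymm_iff]

lemma measureReal_sphere_zero_pow (n : ℕ) :
    ν.real (sphere 0 ((p : ℝ) ^ (-n : ℤ))) = (1 - (p : ℝ)⁻¹) * (p : ℝ) ^ (-n : ℤ) := by
  have hp : (p : ℝ) ≠ 0 := Nat.cast_ne_zero.mpr (Fact.out : p.Prime).ne_zero
  rw [sphere_zero_pow_eq_sdiff, measureReal_sdiff _ measurableSet_closedBall,
    measureReal_closedBall_zero_pow, measureReal_closedBall_zero_pow]
  · rw [zpow_neg, zpow_neg, zpow_natCast, zpow_natCast, pow_succ]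
    field_simp
  · refine closedBall_subset_closedBall (zpow_le_zpow_right₀ ?_ (by omega))
    exact_mod_cast (Fact.out : p.Prime).one_le

lemma iUnion_sphere_zero_pow : ⋃ n : ℕ, sphere (0 : ℤ_[p]) ((p : ℝ) ^ (-n : ℤ)) = {0}ᶜ := by
  ext x
  simp only [Set.mem_iUnion, mem_sphere_zero_iff_norm, Set.mem_compl_singleton_iff]
  constructor
  · rintro ⟨n, hn⟩ rfl
    rw [norm_zero] at hn
    exact (zpow_pos (Nat.cast_pos.mpr (Fact.out : p.Prime).pos) _).ne hn
  · exact fun hx ↦ ⟨x.valuation, norm_eq_zpow_neg_valuation hx⟩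

lemma pairwise_disjoint_sphere_zero_pow :
    Pairwise (Disjoint on fun n : ℕ ↦ sphere (0 : ℤ_[p]) ((p : ℝ) ^ (-n : ℤ))) := by
  intro m n hmn
  refine Set.disjoint_left.mpr fun x hm hn ↦ hmn ?_
  rw [mem_sphere_zero_iff_norm] at hm hn
  have hp : (1 : ℝ) < p := Nat.one_lt_cast.mpr (Fact.out : p.Prime).one_lt
  simpa using zpow_right_injective₀ (zero_lt_one.trans hp) hp.ne' (hm.symm.trans hn)

theorem integral_norm_rpow {s : ℝ} (hs : 0 < s) :
    ∫ x, ‖x‖ ^ s ∂ν = (1 - (p : ℝ)⁻¹) / (1 - (p : ℝ) ^ (-1 - s)) := by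
  have hp : (1 : ℝ) < p := Nat.one_lt_cast.mpr (Fact.out : p.Prime).one_lt
  have hint : Integrable (fun x : ℤ_[p] ↦ ‖x‖ ^ s) ν :=
    (continuous_norm.rpow_const fun _ ↦ Or.inr hs.le).integrable_of_hasCompactSupport
      (.of_compactSpace _)
  calc ∫ x, ‖x‖ ^ s ∂ν
      = ∫ x in ⋃ n : ℕ, sphere 0 ((p : ℝ) ^ (-n : ℤ)), ‖x‖ ^ s ∂ν := by
        refine (setIntegral_eq_integral_of_forall_compl_eq_zero fun x hx ↦ ?_).symm
        rw [iUnion_sphere_zero_pow, Set.notMem_compl_iff, Set.mem_singleton_iff] at hx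
        simp [hx, hs.ne']
    _ = ∑' n : ℕ, ∫ x in sphere 0 ((p : ℝ) ^ (-n : ℤ)), ‖x‖ ^ s ∂ν :=
        integral_iUnion (fun _ ↦ isClosed_sphere.measurableSet) pairwise_disjoint_sphere_zero_pow
          hint.integrableOn
    _ = ∑' n : ℕ, (1 - (p : ℝ)⁻¹) * ((p : ℝ) ^ (-1 - s)) ^ n := by
        refine tsum_congr fun n ↦ ?_
        rw [setIntegral_congr_fun isClosed_sphere.measurableSet
            fun x hx ↦ by rw [mem_sphere_zero_iff_norm.mp hx],
          setIntegral_const, measureReal_sphere_zero_pow, smul_eq_mul, mul_assoc,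
          Real.zpow_neg_mul_rpow (zero_lt_one.trans hp)]
    _ = (1 - (p : ℝ)⁻¹) / (1 - (p : ℝ) ^ (-1 - s)) := by
        rw [tsum_mul_left, tsum_geometric_of_lt_one (by positivity)
          (Real.rpow_lt_one_of_one_lt_of_neg hp (by linarith)), div_eq_mul_inv]

end PadicInt

/-- For an odd prime `p`, Igusa's local zeta function of `f(x₂,x₃) = x₃² − x₂²` over `ℤ_p`
equals `((1 − p⁻¹)/(1 − p^{-1-s}))²`. -/
theorem igusa_zeta_difference_of_squares (hp : p ≠ 2)
    (μ : Measure (ℤ_[p] × ℤ_[p])) [IsProbabilityMeasure μ] [μ.IsAddLeftInvariant]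
    (s : ℝ) (hs : 0 < s) :
    (∫ z : ℤ_[p] × ℤ_[p], ‖z.2 ^ 2 - z.1 ^ 2‖ ^ s ∂μ) =
      ((1 - (p : ℝ)⁻¹) / (1 - (p : ℝ) ^ (-1 - s))) ^ 2 := by
  let ν : Measure ℤ_[p] := addHaarMeasure ⊤
  have hφ : MeasurePreserving (sumDiff ℤ_[p]) μ μ :=
    measurePreserving_of_isAddLeftInvariant _ measurable_sumDiff
      (sumDiff_surjective (PadicInt.isUnit_two hp)) μ μ
  let g : ℤ_[p] × ℤ_[p] → ℝ := fun w ↦ ‖w.1‖ ^ s * ‖w.2‖ ^ s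
  calc ∫ z, ‖z.2 ^ 2 - z.1 ^ 2‖ ^ s ∂μ = ∫ z, g (sumDiff ℤ_[p] z) ∂μ := by
        congr with z
        rw [sumDiff_apply, sq_sub_sq, norm_mul, Real.mul_rpow (norm_nonneg _) (norm_nonneg _)]
    _ = ∫ w, g w ∂(ν.prod ν) := by
        rw [← integral_map hφ.aemeasurable (by fun_prop), hφ.map_eq,
          eq_prod_of_isAddLeftInvariant μ ν ν]
    _ = (∫ x, ‖x‖ ^ s ∂ν) * ∫ x, ‖x‖ ^ s ∂ν := integral_prod_mul (‖·‖ ^ s) (‖·‖ ^ s)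
    _ = ((1 - (p : ℝ)⁻¹) / (1 - (p : ℝ) ^ (-1 - s))) ^ 2 := by
        rw [PadicInt.integral_norm_rpow ν hs, sq]
end

section
/- For p = 2, Igusa's local zeta function of f(x,y) = x^2 + y^2 over Z_2 equals Z_f(s) = 2^{-1} / (1 − 2^{-1-s}). -/
open MeasureTheory

instance : Fact (Nat.Prime 2) := ⟨Nat.prime_two⟩

noncomputable instance : MeasurableSpace ℤ_[2] := borel _
instance : BorelSpace ℤ_[2] := ⟨rfl⟩

/-!
Since `x² + y² = (x + y)² - 2xy`, the condition `2ⁿ ∣ x² + y²` unwinds (peeling off factors `2`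
from `x` and `y`) into the linear conditions `2^⌈n/2⌉ ∣ x + y` and `2^⌊n/2⌋ ∣ x`. So the sublevel
sets of `|x² + y²|₂` are subgroups of `ℤ₂²`, each of index `2` in the previous one, and have Haar
measure `2⁻ⁿ`. The level set `|x² + y²|₂ = 2⁻ⁿ` then has measure `2⁻ⁿ⁻¹`, and the integral is the
geometric series `∑ 2⁻ⁿ⁻¹ 2⁻ⁿˢ`.
-/

open Function

section SumOfTwoSquares

variable {R : Type*} [CommRing R]

theorem two_dvd_sq_add_sq_iff (h2 : Prime (2 : R)) {x y : R} :
    2 ∣ x ^ 2 + y ^ 2 ↔ 2 ∣ x + y := by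
  rw [show x ^ 2 + y ^ 2 = (x + y) ^ 2 - 2 * (x * y) by ring,
    dvd_sub_left (dvd_mul_right 2 _), h2.dvd_pow_iff_dvd two_ne_zero]

variable [IsDomain R]

theorem two_dvd_of_four_dvd_sq_add_sq (h2 : Prime (2 : R)) {x y : R}
    (h : 2 ^ 2 ∣ x ^ 2 + y ^ 2) : 2 ∣ x ∧ 2 ∣ y := by
  obtain ⟨t, ht⟩ := (two_dvd_sq_add_sq_iff h2).1 ((dvd_pow_self 2 two_ne_zero).trans h)
  have hxy : 2 ∣ x * y := by
    rw [show x ^ 2 + y ^ 2 = 2 * (2 * t ^ 2 - x * y) by linear_combination (x + y + 2 * t) * ht,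
      pow_two, mul_dvd_mul_iff_left h2.ne_zero] at h
    simpa using (dvd_sub_right (dvd_mul_right 2 (t ^ 2))).1 h
  have hsum : 2 ∣ x + y := ⟨t, ht⟩
  rcases h2.dvd_or_dvd hxy with hx | hy
  · exact ⟨hx, (dvd_add_right hx).1 hsum⟩
  · exact ⟨(dvd_add_left hy).1 hsum, hy⟩

theorem two_pow_dvd_sq_add_sq_iff (h2 : Prime (2 : R)) :
    ∀ (n : ℕ) (x y : R), 2 ^ n ∣ x ^ 2 + y ^ 2 ↔ 2 ^ ((n + 1) / 2) ∣ x + y ∧ 2 ^ (n / 2) ∣ x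
  | 0, x, y => by simp
  | 1, x, y => by simpa using two_dvd_sq_add_sq_iff h2
  | n + 2, x, y => by
    by_cases hxy : 2 ∣ x ∧ 2 ∣ y
    · obtain ⟨⟨u, rfl⟩, ⟨v, rfl⟩⟩ := hxy
      rw [show (n + 2 + 1) / 2 = (n + 1) / 2 + 1 by omega, show (n + 2) / 2 = n / 2 + 1 by omega,
        show (2 * u) ^ 2 + (2 * v) ^ 2 = 2 ^ 2 * (u ^ 2 + v ^ 2) by ring,
        show 2 * u + 2 * v = 2 * (u + v) by ring, show (2 : R) ^ (n + 2) = 2 ^ 2 * 2 ^ n by ring,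
        mul_dvd_mul_iff_left (pow_ne_zero 2 h2.ne_zero), pow_succ' 2 ((n + 1) / 2),
        pow_succ' 2 (n / 2), mul_dvd_mul_iff_left h2.ne_zero, mul_dvd_mul_iff_left h2.ne_zero]
      exact two_pow_dvd_sq_add_sq_iff h2 n u v
    · refine iff_of_false (fun h ↦ hxy (two_dvd_of_four_dvd_sq_add_sq h2
        ((pow_dvd_pow 2 (by omega)).trans h))) ?_
      rintro ⟨hsum, hpow⟩
      have hx : 2 ∣ x := (dvd_pow_self 2 (by omega)).trans hpow
      exact hxy ⟨hx, (dvd_add_right hx).1 ((dvd_pow_self 2 (by omega)).trans hsum)⟩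

end SumOfTwoSquares

theorem AddSubgroup.measure_eq_two_mul {G : Type*} [AddGroup G] [MeasurableSpace G]
    [MeasurableAdd G] (μ : Measure G) [μ.IsAddLeftInvariant] {H K : AddSubgroup G}
    (hK : MeasurableSet (K : Set G)) (hKH : K ≤ H) {c : G} (hcH : c ∈ H) (hcK : c ∉ K)
    (hcover : ∀ z ∈ H, z ∈ K ∨ -c + z ∈ K) :
    μ H = 2 * μ K := by
  have hH : (H : Set G) = (K : Set G) ∪ (fun z ↦ -c + z) ⁻¹' K := by
    ext z
    refine ⟨hcover z, ?_⟩
    rintro (hz | hz)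
    · exact hKH hz
    · simpa using H.add_mem hcH (hKH hz)
  have hdisj : Disjoint (K : Set G) ((fun z ↦ -c + z) ⁻¹' K) :=
    Set.disjoint_left.2 fun z hz hcz ↦ hcK (by simpa using K.sub_mem hz hcz)
  rw [hH, measure_union' hdisj hK, measure_preimage_add, two_mul]

namespace PadicInt

section

variable {p : ℕ} [Fact p.Prime]

theorem norm_le_pow_iff_dvd (x : ℤ_[p]) (n : ℕ) :
    ‖x‖ ≤ (p : ℝ) ^ (-n : ℤ) ↔ (p : ℤ_[p]) ^ n ∣ x := by
  rw [norm_le_pow_iff_mem_span_pow, Ideal.mem_span_singleton]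

theorem norm_eq_pow_iff (x : ℤ_[p]) (n : ℕ) :
    ‖x‖ = (p : ℝ) ^ (-n : ℤ) ↔
      ‖x‖ ≤ (p : ℝ) ^ (-n : ℤ) ∧ ¬ ‖x‖ ≤ (p : ℝ) ^ (-(n + 1 : ℕ) : ℤ) := by
  rw [norm_le_pow_iff_norm_lt_pow_add_one x (-(n + 1 : ℕ)),
    show (-(n + 1 : ℕ) : ℤ) + 1 = -n by push_cast; ring]
  exact ⟨fun h ↦ ⟨h.le, h.not_lt⟩, fun ⟨hle, hlt⟩ ↦ hle.antisymm (not_lt.1 hlt)⟩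

/-- `X` splits into the level sets `{‖F‖ = p⁻ⁿ}`, of measure `rⁿ - rⁿ⁺¹`, and the null set
`{F = 0}`. -/
theorem integral_norm_rpow_eq {X : Type*} [MeasurableSpace X] (μ : Measure X)
    [IsFiniteMeasure μ] {F : X → ℤ_[p]} (hF : Measurable fun x ↦ ‖F x‖) {r : ℝ} (hr : r < 1)
    (hlevel : ∀ n : ℕ, μ.real {x | ‖F x‖ ≤ (p : ℝ) ^ (-n : ℤ)} = r ^ n) {s : ℝ} (hs : 0 ≤ s) :
    ∫ x, ‖F x‖ ^ s ∂μ = (1 - r) / (1 - r * (p : ℝ) ^ (-s)) := by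
  have hp : (1 : ℝ) < p := mod_cast (Fact.out : p.Prime).one_lt
  have hr0 : 0 ≤ r := by simpa using (hlevel 1).symm.trans_ge measureReal_nonneg
  set T : ℕ → Set X := fun n ↦ {x | ‖F x‖ = (p : ℝ) ^ (-n : ℤ)}
  have hT_meas (n : ℕ) : MeasurableSet (T n) := hF (measurableSet_singleton _)
  have hT_disj : Pairwise (Disjoint on T) := fun i j hij ↦ Set.disjoint_left.2 fun x hi hj ↦
    hij (by simpa using zpow_right_injective₀ (by linarith) hp.ne' (hi.symm.trans hj))
  have hT_real (n : ℕ) : μ.real (T n) = r ^ n - r ^ (n + 1) := by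
    have : T n = {x | ‖F x‖ ≤ (p : ℝ) ^ (-n : ℤ)} \ {x | ‖F x‖ ≤ (p : ℝ) ^ (-(n + 1 : ℕ) : ℤ)} :=
      Set.ext fun x ↦ norm_eq_pow_iff (F x) n
    rw [this, measureReal_sdiff (fun x hx ↦ ?_) (measurableSet_le hF measurable_const),
      hlevel, hlevel]
    exact hx.trans (zpow_le_zpow_right₀ hp.le (by omega))
  have hnull : μ (⋃ n, T n)ᶜ = 0 := by
    have hzero : (⋃ n, T n)ᶜ ⊆ {x | F x = 0} := fun x hx ↦ by
      by_contra h
      exact hx (Set.mem_iUnion.2 ⟨(F x).valuation, norm_eq_zpow_neg_valuation h⟩)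
    have hle (n : ℕ) : μ.real (⋃ n, T n)ᶜ ≤ r ^ n := hlevel n ▸
      measureReal_mono (hzero.trans fun x hx ↦ by simp [show F x = 0 from hx])
    rw [← measureReal_eq_zero_iff]
    exact le_antisymm (ge_of_tendsto' (tendsto_pow_atTop_nhds_zero_of_lt_one hr0 hr) hle)
      measureReal_nonneg
  have hint : Integrable (fun x ↦ ‖F x‖ ^ s) μ :=
    Integrable.of_bound (hF.pow_const s).aestronglyMeasurable 1 (ae_of_all _ fun x ↦ by
      rw [Real.norm_of_nonneg (by positivity)]
      exact Real.rpow_le_one (norm_nonneg _) (norm_le_one _) hs)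
  have hq0 : 0 ≤ r * (p : ℝ) ^ (-s) := by positivity
  have hq1 : r * (p : ℝ) ^ (-s) < 1 := by
    have : (p : ℝ) ^ (-s) ≤ 1 := Real.rpow_le_one_of_one_le_of_nonpos hp.le (by linarith)
    nlinarith
  have hT_integral (n : ℕ) : ∫ x in T n, ‖F x‖ ^ s ∂μ = (1 - r) * (r * (p : ℝ) ^ (-s)) ^ n := by
    have hpow : (((p : ℝ) ^ (-n : ℤ)) ^ s) = ((p : ℝ) ^ (-s)) ^ n := by
      rw [← Real.rpow_intCast, ← Real.rpow_natCast, ← Real.rpow_mul (by positivity),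
        ← Real.rpow_mul (by positivity)]
      push_cast
      ring_nf
    rw [setIntegral_congr_fun (hT_meas n) (fun x (hx : _ = _) ↦ by rw [hx]), setIntegral_const,
      hT_real, smul_eq_mul, hpow]
    ring
  calc ∫ x, ‖F x‖ ^ s ∂μ = ∫ x in ⋃ n, T n, ‖F x‖ ^ s ∂μ := by
        rw [setIntegral_congr_set (ae_eq_univ.2 hnull), setIntegral_univ]
    _ = ∑' n, ∫ x in T n, ‖F x‖ ^ s ∂μ := integral_iUnion hT_meas hT_disj hint.integrableOn
    _ = (1 - r) / (1 - r * (p : ℝ) ^ (-s)) := by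
        rw [tsum_congr hT_integral, tsum_mul_left, tsum_geometric_of_lt_one hq0 hq1,
          div_eq_mul_inv]

end

theorem two_pow_succ_dvd_or_dvd_sub {k : ℕ} {a : ℤ_[2]} (h : 2 ^ k ∣ a) :
    2 ^ (k + 1) ∣ a ∨ 2 ^ (k + 1) ∣ a - 2 ^ k := by
  obtain ⟨b, rfl⟩ := h
  obtain ⟨m, hm, hb⟩ := exists_mem_range b
  rw [maximalIdeal_eq_span_p, Ideal.mem_span_singleton] at hb
  interval_cases m
  · left
    simpa [pow_succ] using mul_dvd_mul_left (2 ^ k) hb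
  · right
    simpa [pow_succ, mul_sub] using mul_dvd_mul_left (2 ^ k) hb

theorem prime_two : Prime (2 : ℤ_[2]) := by
  simpa using prime_p (p := 2)

end PadicInt

/-- The pairs `(x, y)` with `2ⁿ ∣ x² + y²`, by `two_pow_dvd_sq_add_sq_iff`. -/
def sumSqLattice (n : ℕ) : AddSubgroup (ℤ_[2] × ℤ_[2]) where
  carrier := {z | 2 ^ ((n + 1) / 2) ∣ z.1 + z.2 ∧ 2 ^ (n / 2) ∣ z.1}
  add_mem' := fun ⟨hs, hx⟩ ⟨hs', hx'⟩ ↦ ⟨by simpa [add_add_add_comm] using dvd_add hs hs',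
    dvd_add hx hx'⟩
  zero_mem' := by simp
  neg_mem' := fun ⟨hs, hx⟩ ↦ ⟨by simpa [neg_add_rev, add_comm] using hs.neg_right, hx.neg_right⟩

theorem mem_sumSqLattice {n : ℕ} {z : ℤ_[2] × ℤ_[2]} :
    z ∈ sumSqLattice n ↔ 2 ^ ((n + 1) / 2) ∣ z.1 + z.2 ∧ 2 ^ (n / 2) ∣ z.1 :=
  Iff.rfl

theorem coe_sumSqLattice (n : ℕ) :
    (sumSqLattice n : Set (ℤ_[2] × ℤ_[2])) = {z | ‖z.1 ^ 2 + z.2 ^ 2‖ ≤ (2 : ℝ) ^ (-n : ℤ)} := by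
  ext z
  rw [SetLike.mem_coe, mem_sumSqLattice, ← two_pow_dvd_sq_add_sq_iff PadicInt.prime_two]
  simpa using (PadicInt.norm_le_pow_iff_dvd (p := 2) _ n).symm

theorem sumSqLattice_succ_le (n : ℕ) : sumSqLattice (n + 1) ≤ sumSqLattice n :=
  fun _ ⟨hs, hx⟩ ↦ ⟨(pow_dvd_pow 2 (by omega)).trans hs, (pow_dvd_pow 2 (by omega)).trans hx⟩

/-- The coset representative is `(0, 2ᵐ)` for `n = 2m` and `(2ᵐ, 2ᵐ)` for `n = 2m + 1`;
in both cases `x² + y² = 2ⁿ`. -/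
theorem exists_sumSqLattice_coset (n : ℕ) :
    ∃ c ∈ sumSqLattice n, c ∉ sumSqLattice (n + 1) ∧
      ∀ z ∈ sumSqLattice n, z ∈ sumSqLattice (n + 1) ∨ -c + z ∈ sumSqLattice (n + 1) := by
  have hndvd (m : ℕ) : ¬ (2 : ℤ_[2]) ^ (m + 1) ∣ 2 ^ m := by
    rw [pow_dvd_pow_iff PadicInt.prime_two.ne_zero PadicInt.prime_two.not_isUnit]
    omega
  obtain ⟨m, rfl | rfl⟩ := Nat.even_or_odd' n
  · refine ⟨(0, 2 ^ m), ?_, ?_, fun z hz ↦ ?_⟩ <;>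
      simp only [mem_sumSqLattice, show (2 * m + 1) / 2 = m by omega,
        show 2 * m / 2 = m by omega, show (2 * m + 1 + 1) / 2 = m + 1 by omega] at *
    · simp
    · simpa using hndvd m
    · refine (PadicInt.two_pow_succ_dvd_or_dvd_sub hz.1).imp (⟨·, hz.2⟩) fun h ↦ ⟨?_, ?_⟩
      · simpa [sub_eq_neg_add, add_left_comm] using h
      · simpa using hz.2
  · refine ⟨(2 ^ m, 2 ^ m), ?_, ?_, fun z hz ↦ ?_⟩ <;>
      simp only [mem_sumSqLattice, show (2 * m + 1 + 1) / 2 = m + 1 by omega,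
        show (2 * m + 1) / 2 = m by omega, show (2 * m + 1 + 1 + 1) / 2 = m + 1 by omega] at *
    · exact ⟨⟨1, by ring⟩, dvd_rfl⟩
    · exact fun h ↦ hndvd m h.2
    · refine (PadicInt.two_pow_succ_dvd_or_dvd_sub hz.2).imp (⟨hz.1, ·⟩) fun h ↦ ⟨?_, ?_⟩
      · simpa [pow_succ, mul_two, sub_eq_neg_add, add_add_add_comm] using
          dvd_sub hz.1 (dvd_refl (2 ^ (m + 1)))
      · simpa [sub_eq_neg_add] using h

theorem measure_sumSqLattice (μ : Measure (ℤ_[2] × ℤ_[2])) [IsProbabilityMeasure μ]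
    [μ.IsAddLeftInvariant] (n : ℕ) : μ (sumSqLattice n) = 2⁻¹ ^ n := by
  induction n with
  | zero => simp [show sumSqLattice 0 = ⊤ from eq_top_iff.2 fun z _ ↦ by simp [mem_sumSqLattice]]
  | succ n ih =>
    obtain ⟨c, hcn, hcn', hcover⟩ := exists_sumSqLattice_coset n
    have hmeas : MeasurableSet (sumSqLattice (n + 1) : Set (ℤ_[2] × ℤ_[2])) := by
      rw [coe_sumSqLattice]
      exact measurableSet_le (by fun_prop) measurable_const
    have h := AddSubgroup.measure_eq_two_mul μ hmeas (sumSqLattice_succ_le n) hcn hcn' hcover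
    rw [ih, eq_comm, ← ENNReal.eq_div_iff two_ne_zero ENNReal.ofNat_ne_top] at h
    rw [h, pow_succ, div_eq_mul_inv]

/-- Igusa's local zeta function of `f(x,y) = x² + y²` over `ℤ₂`:
`Z_f(s) = 2⁻¹ / (1 − 2^{-1-s})`. -/
theorem igusa_zeta_sum_of_two_squares (μ : Measure (ℤ_[2] × ℤ_[2]))
    [IsProbabilityMeasure μ] [μ.IsAddLeftInvariant] (s : ℝ) (hs : 0 < s) :
    (∫ z : ℤ_[2] × ℤ_[2], ‖z.1 ^ 2 + z.2 ^ 2‖ ^ s ∂μ) =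
      (2 : ℝ)⁻¹ / (1 - (2 : ℝ) ^ (-1 - s)) := by
  have hlevel (n : ℕ) :
      μ.real {z | ‖z.1 ^ 2 + z.2 ^ 2‖ ≤ ((2 : ℕ) : ℝ) ^ (-n : ℤ)} = 2⁻¹ ^ n := by
    rw [Nat.cast_ofNat, ← coe_sumSqLattice, measureReal_def, measure_sumSqLattice]
    simp
  rw [PadicInt.integral_norm_rpow_eq μ (by fun_prop) (by norm_num) hlevel hs.le,
    show -1 - s = -1 + -s by ring, Real.rpow_add two_pos, Real.rpow_neg_one]
  norm_num
end

section
/- Let L_p be a Z_p-Lie algebra free of rank 3 with basis (e_1,e_2,e_3) and structure matrix A (with rows the coordinates of [e_2,e_3], [e_3,e_1], [e_1,e_2]). A full sublattice Λ with basis matrix M = Dα^{-1}, where D = diag(p^{r_0+r_1+r_2}, p^{r_0+r_2}, p^{r_0}) and α ∈ GL_3(Z_p), is a Lie subalgebra of L_p if and only if v_p((α e_1)^t A (α e_1)) ≥ r_1 − r_0, where α e_1 is the first column of α. -/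
/-
Write `β = α⁻¹` and `D = diag(d₀, d₁, d₂)`. Then `Λ` is spanned by the rows `mᵢ = dᵢ βᵢ` of `D β`,
and `x ∈ Λ` iff `d_l ∣ (x α)_l` for every `l`. By bilinearity and antisymmetry, `Λ` is closed
under the bracket iff it contains the three brackets `[m_{k+1}, m_{k+2}]` (indices mod 3). The
cross product of two rows of `β` is a column of `adj β = det β • α`, so
`[m_{k+1}, m_{k+2}] α = det β · d_{k+1} d_{k+2} · (αᵀ A α)_k`, and closure becomes
`d_l ∣ d_{k+1} d_{k+2} (αᵀ A α)_{kl}` for all `k, l`. Since `d₂ ∣ d₁ ∣ d₀`, all of these hold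
except possibly `p^{r₀+r₁+r₂} ∣ p^{2r₀+r₂} (αᵀ A α)₀₀`, which is the valuation condition.
-/

open Matrix

variable {p : ℕ} [Fact p.Prime]

def cross {R : Type*} [CommRing R] (v w : Fin 3 → R) : Fin 3 → R :=
  ![v 1 * w 2 - v 2 * w 1, v 2 * w 0 - v 0 * w 2, v 0 * w 1 - v 1 * w 0]

/-- The bilinear antisymmetric bracket on `R³` with structure matrix `A`, whose rows are
the coordinates of `[e₂,e₃]`, `[e₃,e₁]`, `[e₁,e₂]`: `[v,w] = (v × w)ᵗ A`. -/
def brk {R : Type*} [CommRing R] (A : Matrix (Fin 3) (Fin 3) R) (v w : Fin 3 → R) :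
    Fin 3 → R :=
  Matrix.vecMul (cross v w) A

theorem Submodule.forall_mem_span_range_bilin_iff {R M ι : Type*} [CommSemiring R]
    [AddCommMonoid M] [Module R M] (f : M →ₗ[R] M →ₗ[R] M) (m : ι → M) :
    (∀ v ∈ span R (Set.range m), ∀ w ∈ span R (Set.range m), f v w ∈ span R (Set.range m)) ↔
      ∀ i j, f (m i) (m j) ∈ span R (Set.range m) := by
  rw [← map₂_le, map₂_span_span, span_le, Set.image2_subset_iff]
  simp

theorem Matrix.adjugate_eq_det_smul_of_mul_eq_one {R n : Type*} [CommRing R] [Fintype n]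
    [DecidableEq n] {B C : Matrix n n R} (h : B * C = 1) : B.adjugate = B.det • C := by
  calc B.adjugate = B.adjugate * (B * C) := by rw [h, Matrix.mul_one]
    _ = B.det • C := by rw [← Matrix.mul_assoc, adjugate_mul, smul_mul, Matrix.one_mul]

theorem Matrix.mem_span_range_diagonal_mul_inv_iff {R n : Type*} [CommRing R] [Fintype n]
    [DecidableEq n] (d : n → R) (α : GL n R) (x : n → R) :
    x ∈ Submodule.span R (Set.range (diagonal d * (↑α⁻¹ : Matrix n n R))) ↔
      ∀ l, d l ∣ (x ᵥ* (↑α : Matrix n n R)) l := by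
  have hcoeff : ∀ c : n → R, c ᵥ* (diagonal d * (↑α⁻¹ : Matrix n n R)) = x ↔
      (fun l => c l * d l) = x ᵥ* (↑α : Matrix n n R) := by
    intro c
    rw [← vecMul_vecMul,
      show c ᵥ* diagonal d = fun l => c l * d l from funext (vecMul_diagonal c d)]
    constructor
    · rintro rfl
      rw [vecMul_vecMul, α.inv_mul, vecMul_one]
    · intro h
      rw [h, vecMul_vecMul, α.mul_inv, vecMul_one]
  change x ∈ Submodule.span R (Set.range (row _)) ↔ _
  rw [← range_vecMulLinear, LinearMap.mem_range]
  simp only [vecMulLinear_apply, hcoeff, funext_iff, dvd_iff_exists_eq_mul_left]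
  rw [Classical.skolem]
  simp only [eq_comm]

theorem Matrix.transpose_mul_mul_apply {R n : Type*} [NonUnitalSemiring R] [Fintype n]
    (A B : Matrix n n R) (i j : n) :
    (Bᵀ * A * B) i j = (fun k => B k i) ⬝ᵥ (A *ᵥ fun k => B k j) := by
  rw [Matrix.mul_assoc]
  simp only [mul_apply, transpose_apply, dotProduct, mulVec]

theorem Matrix.cross_row_row_eq_adjugate_col {R : Type*} [CommRing R]
    (B : Matrix (Fin 3) (Fin 3) R) (k : Fin 3) :
    B (k + 1) ⨯₃ B (k + 2) = fun i => B.adjugate i k := by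
  ext i
  fin_cases k <;> fin_cases i <;> simp [cross_apply, adjugate_fin_three] <;> ring

theorem forall_dvd_cyclic_mul_iff {M : Type*} [CommMonoid M] {d : Fin 3 → M}
    (h21 : d 2 ∣ d 1) (h10 : d 1 ∣ d 0) (x : Fin 3 → Fin 3 → M) :
    (∀ k l, d l ∣ d (k + 1) * d (k + 2) * x k l) ↔ d 0 ∣ d 1 * d 2 * x 0 0 := by
  refine ⟨fun h => h 0 0, fun h k l => ?_⟩
  fin_cases k <;> fin_cases l
  all_goals first
    | exact h
    | exact (dvd_mul_right _ _).mul_right _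
    | exact (dvd_mul_left _ _).mul_right _
    | exact (h10.mul_left _).mul_right _
    | exact (h21.mul_left _).mul_right _

theorem PadicInt.pow_dvd_pow_mul_iff_norm_le {p : ℕ} [Fact p.Prime] (x : ℤ_[p]) (a b : ℕ) :
    (p : ℤ_[p]) ^ a ∣ (p : ℤ_[p]) ^ b * x ↔ ‖x‖ ≤ (p : ℝ) ^ ((b : ℤ) - a) := by
  have hp : (0 : ℝ) < p := by exact_mod_cast (Fact.out : p.Prime).pos
  rw [← Ideal.mem_span_singleton, ← norm_le_pow_iff_mem_span_pow, norm_mul, norm_p_pow,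
    show -(a : ℤ) = -b + (b - a) by ring, zpow_add₀ hp.ne']
  exact mul_le_mul_iff_right₀ (zpow_pos hp _)

section Bracket

variable {R : Type*} [CommRing R] (A : Matrix (Fin 3) (Fin 3) R)

theorem brk_eq_cross_vecMul (v w : Fin 3 → R) : brk A v w = (v ⨯₃ w) ᵥ* A := rfl

def brkBilin : (Fin 3 → R) →ₗ[R] (Fin 3 → R) →ₗ[R] Fin 3 → R :=
  crossProduct.compr₂ A.vecMulLinear

theorem brkBilin_apply (v w : Fin 3 → R) : brkBilin A v w = brk A v w := rfl

theorem brk_self (v : Fin 3 → R) : brk A v v = 0 := by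
  rw [brk_eq_cross_vecMul, cross_self, zero_vecMul]

theorem brk_swap (v w : Fin 3 → R) : brk A w v = -brk A v w := by
  rw [brk_eq_cross_vecMul, brk_eq_cross_vecMul, ← cross_anticomm, neg_vecMul]

theorem brk_smul_smul (s t : R) (v w : Fin 3 → R) :
    brk A (s • v) (t • w) = (s * t) • brk A v w := by
  simp only [← brkBilin_apply, map_smul, LinearMap.smul_apply, smul_smul, mul_comm]

theorem forall_brk_mem_iff_cyclic (S : Submodule R (Fin 3 → R)) (m : Fin 3 → Fin 3 → R) :
    (∀ i j, brk A (m i) (m j) ∈ S) ↔ ∀ k : Fin 3, brk A (m (k + 1)) (m (k + 2)) ∈ S := by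
  refine ⟨fun h k => h _ _, fun h i j => ?_⟩
  fin_cases i <;> fin_cases j
  all_goals first
    | simpa only [brk_self] using S.zero_mem
    | exact h 0 | exact h 1 | exact h 2
    | rw [brk_swap]; first | exact S.neg_mem (h 0) | exact S.neg_mem (h 1) | exact S.neg_mem (h 2)

theorem brk_rows_diagonal_mul_vecMul {B C : Matrix (Fin 3) (Fin 3) R} (hBC : B * C = 1)
    (d : Fin 3 → R) (k : Fin 3) :
    brk A ((diagonal d * B) (k + 1)) ((diagonal d * B) (k + 2)) ᵥ* C =
      B.det • (d (k + 1) * d (k + 2)) • (Cᵀ * A * C) k := by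
  have hrow : ∀ i, (diagonal d * B) i = d i • B i := fun i => funext (diagonal_mul d B i)
  rw [hrow, hrow, brk_smul_smul, brk_eq_cross_vecMul, cross_row_row_eq_adjugate_col,
    adjugate_eq_det_smul_of_mul_eq_one hBC]
  ext l
  simp only [vecMul, dotProduct, mul_apply, transpose_apply, Matrix.smul_apply, smul_eq_mul,
    Pi.smul_apply, Fin.sum_univ_three]
  ring

theorem brk_rows_diagonal_mul_inv_mem_span_iff (d : Fin 3 → R) (α : GL (Fin 3) R) (k : Fin 3) :
    brk A ((diagonal d * (↑α⁻¹ : Matrix (Fin 3) (Fin 3) R)) (k + 1))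
        ((diagonal d * (↑α⁻¹ : Matrix (Fin 3) (Fin 3) R)) (k + 2)) ∈
        Submodule.span R (Set.range (diagonal d * (↑α⁻¹ : Matrix (Fin 3) (Fin 3) R))) ↔
      ∀ l, d l ∣ d (k + 1) * d (k + 2) *
        ((↑α : Matrix (Fin 3) (Fin 3) R)ᵀ * A * (↑α : Matrix (Fin 3) (Fin 3) R)) k l := by
  simp only [mem_span_range_diagonal_mul_inv_iff, brk_rows_diagonal_mul_vecMul A α.inv_mul,
    Pi.smul_apply, smul_eq_mul, (isUnits_det_units α⁻¹).dvd_mul_left]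

end Bracket

theorem sublattice_is_subalgebra_iff_general
    (A : Matrix (Fin 3) (Fin 3) ℤ_[p])
    (r₀ r₁ r₂ : ℕ) (α : GL (Fin 3) ℤ_[p]) :
    (∀ v ∈ Submodule.span ℤ_[p] (Set.range fun i =>
        (Matrix.diagonal ![(p : ℤ_[p]) ^ (r₀ + r₁ + r₂), (p : ℤ_[p]) ^ (r₀ + r₂),
          (p : ℤ_[p]) ^ r₀] * (↑α⁻¹ : Matrix (Fin 3) (Fin 3) ℤ_[p])) i),
      ∀ w ∈ Submodule.span ℤ_[p] (Set.range fun i =>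
        (Matrix.diagonal ![(p : ℤ_[p]) ^ (r₀ + r₁ + r₂), (p : ℤ_[p]) ^ (r₀ + r₂),
          (p : ℤ_[p]) ^ r₀] * (↑α⁻¹ : Matrix (Fin 3) (Fin 3) ℤ_[p])) i),
      brk A v w ∈ Submodule.span ℤ_[p] (Set.range fun i =>
        (Matrix.diagonal ![(p : ℤ_[p]) ^ (r₀ + r₁ + r₂), (p : ℤ_[p]) ^ (r₀ + r₂),
          (p : ℤ_[p]) ^ r₀] * (↑α⁻¹ : Matrix (Fin 3) (Fin 3) ℤ_[p])) i)) ↔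
    ‖dotProduct (fun i => (↑α : Matrix (Fin 3) (Fin 3) ℤ_[p]) i 0)
        (A.mulVec fun i => (↑α : Matrix (Fin 3) (Fin 3) ℤ_[p]) i 0)‖ ≤
      (p : ℝ) ^ (-((r₁ : ℤ) - (r₀ : ℤ))) := by
  set d : Fin 3 → ℤ_[p] :=
    ![(p : ℤ_[p]) ^ (r₀ + r₁ + r₂), (p : ℤ_[p]) ^ (r₀ + r₂), (p : ℤ_[p]) ^ r₀]
  set M : Matrix (Fin 3) (Fin 3) ℤ_[p] := diagonal d * (↑α⁻¹ : Matrix (Fin 3) (Fin 3) ℤ_[p])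
  have h21 : d 2 ∣ d 1 := pow_dvd_pow _ (by omega)
  have h10 : d 1 ∣ d 0 := pow_dvd_pow _ (by omega)
  have h12 : d 1 * d 2 = (p : ℤ_[p]) ^ (r₀ + r₂ + r₀) := (pow_add _ _ _).symm
  have hexp : ((r₀ + r₂ + r₀ : ℕ) : ℤ) - (r₀ + r₁ + r₂ : ℕ) = -((r₁ : ℤ) - r₀) := by
    push_cast; ring
  refine (Submodule.forall_mem_span_range_bilin_iff (brkBilin A) M).trans ?_
  refine (forall_brk_mem_iff_cyclic A _ M).trans ?_
  simp only [M, brk_rows_diagonal_mul_inv_mem_span_iff]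
  refine (forall_dvd_cyclic_mul_iff h21 h10 _).trans ?_
  rw [show d 0 = (p : ℤ_[p]) ^ (r₀ + r₁ + r₂) from rfl, h12,
    PadicInt.pow_dvd_pow_mul_iff_norm_le, hexp, transpose_mul_mul_apply]

/-- The sublattice with basis matrix `M = D α⁻¹`, `D = diag(p^{r₀+r₁+r₂}, p^{r₀+r₂}, p^{r₀})`,
is a Lie subalgebra of the rank-3 `ℤ_p`-Lie algebra with structure matrix `A` iff
`v_p((α e₁)ᵗ A (α e₁)) ≥ r₁ − r₀` (stated via the norm: `‖(αe₁)ᵗ A (αe₁)‖ ≤ p^{r₀−r₁}`). -/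
theorem sublattice_is_subalgebra_iff
    (A : Matrix (Fin 3) (Fin 3) ℤ_[p])
    (hJacobi : ∀ u v w : Fin 3 → ℤ_[p],
      brk A u (brk A v w) + brk A v (brk A w u) + brk A w (brk A u v) = 0)
    (r₀ r₁ r₂ : ℕ) (α : GL (Fin 3) ℤ_[p]) :
    (∀ v ∈ Submodule.span ℤ_[p] (Set.range fun i =>
        (Matrix.diagonal ![(p : ℤ_[p]) ^ (r₀ + r₁ + r₂), (p : ℤ_[p]) ^ (r₀ + r₂),
          (p : ℤ_[p]) ^ r₀] * (↑α⁻¹ : Matrix (Fin 3) (Fin 3) ℤ_[p])) i),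
      ∀ w ∈ Submodule.span ℤ_[p] (Set.range fun i =>
        (Matrix.diagonal ![(p : ℤ_[p]) ^ (r₀ + r₁ + r₂), (p : ℤ_[p]) ^ (r₀ + r₂),
          (p : ℤ_[p]) ^ r₀] * (↑α⁻¹ : Matrix (Fin 3) (Fin 3) ℤ_[p])) i),
      brk A v w ∈ Submodule.span ℤ_[p] (Set.range fun i =>
        (Matrix.diagonal ![(p : ℤ_[p]) ^ (r₀ + r₁ + r₂), (p : ℤ_[p]) ^ (r₀ + r₂),
          (p : ℤ_[p]) ^ r₀] * (↑α⁻¹ : Matrix (Fin 3) (Fin 3) ℤ_[p])) i)) ↔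
    ‖dotProduct (fun i => (↑α : Matrix (Fin 3) (Fin 3) ℤ_[p]) i 0)
        (A.mulVec fun i => (↑α : Matrix (Fin 3) (Fin 3) ℤ_[p]) i 0)‖ ≤
      (p : ℝ) ^ (-((r₁ : ℤ) - (r₀ : ℤ))) :=
  sublattice_is_subalgebra_iff_general A r₀ r₁ r₂ α
end

section
/- For an odd prime p, Igusa's local zeta function of the binary quadratic form f(x_1,x_2) = x_1^2 − D x_2^2 over Z_p, where D is a unit in Z_p, satisfies Z_f(s) = ((1-p^{-1})/(1-p^{-1-s})) · ((1 − χ p^{-1})/(1 − χ p^{-1-s})) where χ = 1 if D is a square in Z_p^× and χ = −1 otherwise. Equivalently: Z_f(s) = ((1-p^{-1})/(1-p^{-1-s}))^2 if D is a square mod p, and Z_f(s) = (1-p^{-2})/(1-p^{-2-2s}) if D is a non-square mod p. -/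
open MeasureTheory
open scoped Classical

variable {p : ℕ} [Fact p.Prime]

/-!
For a translation-invariant probability measure on `ℤ_p²`, the subgroup `p^i ℤ_p × p^j ℤ_p`
has index `p^(i+j)`, hence measure `p^-(i+j)`; so products of spheres `‖x‖ = p^-i`, `‖y‖ = p^-j`
have measure `(1 - p⁻¹)² p^-(i+j)`.

If `D = c²`, then `(x, y) ↦ (x - c y, x + c y)` is a surjective endomorphism of `ℤ_p²` (as `2` and
`c` are units), so it maps the measure to another invariant probability measure, and it turns
`f` into `x y`: `Z_f(s)` is the square of `∑ᵢ (1 - p⁻¹) p^-i p^-is`.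

If `D` is not a square, Hensel's lemma makes `t² - D` a unit for every unit `t`, whence
`‖x² - D y²‖ = max ‖x‖ ‖y‖ ^ 2`; summing over the spheres of the max norm on `ℤ_p²`, of measure
`(1 - p⁻²) p^-2k`, gives `(1 - p⁻²) / (1 - p^(-2-2s))`.
-/

open Metric

theorem MeasureTheory.integral_eq_tsum_of_eqOn {X ι : Type*} [MeasurableSpace X] [Countable ι]
    {μ : Measure X} {F : X → ℝ} (hF : Integrable F μ) {A : ι → Set X}
    (hA : ∀ i, MeasurableSet (A i)) (hAd : Pairwise (Function.onFun Disjoint A)) {c : ι → ℝ}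
    (hc : ∀ i, Set.EqOn F (fun _ ↦ c i) (A i)) (hF0 : ∀ x ∉ ⋃ i, A i, F x = 0) :
    ∫ x, F x ∂μ = ∑' i, μ.real (A i) * c i :=
  calc ∫ x, F x ∂μ = ∫ x in ⋃ i, A i, F x ∂μ :=
        (setIntegral_eq_integral_of_forall_compl_eq_zero hF0).symm
    _ = ∑' i, ∫ x in A i, F x ∂μ := integral_iUnion hA hAd hF.integrableOn
    _ = ∑' i, μ.real (A i) * c i := tsum_congr fun i ↦ by
      rw [setIntegral_congr_fun (hA i) (hc i), setIntegral_const, smul_eq_mul]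

theorem hasSum_pow_sub_pow_succ_mul_rpow {a s : ℝ} (ha0 : 0 < a) (ha1 : a < 1) (hs : -1 < s) :
    HasSum (fun k : ℕ ↦ (a ^ k - a ^ (k + 1)) * (a ^ k) ^ s) ((1 - a) / (1 - a ^ (1 + s))) := by
  have hterm : ∀ k : ℕ, (a ^ k - a ^ (k + 1)) * (a ^ k) ^ s = (1 - a) * (a ^ (1 + s)) ^ k := by
    intro k
    rw [← Real.rpow_natCast, ← Real.rpow_mul ha0.le, ← Real.rpow_natCast (a ^ (1 + s)),
      ← Real.rpow_mul ha0.le, Real.rpow_natCast, add_mul, one_mul, Real.rpow_add ha0, pow_succ,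
      Real.rpow_natCast, mul_comm s]
    ring
  simp_rw [hterm, div_eq_mul_inv]
  exact (hasSum_geometric_of_lt_one (by positivity)
    (Real.rpow_lt_one ha0.le ha1 (by linarith))).mul_left _

theorem sphere_zero_eq_closedBall_sdiff {E : Type*} [SeminormedAddGroup E] {a b : ℝ}
    (h : ∀ x : E, ‖x‖ ≤ b ↔ ‖x‖ < a) : sphere (0 : E) a = closedBall 0 a \ closedBall 0 b := by
  ext x
  simp only [mem_sphere_zero_iff_norm, Set.mem_sdiff, mem_closedBall_zero_iff, h, not_lt]
  exact le_antisymm_iff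

theorem pairwise_disjoint_sphere {E : Type*} [SeminormedAddGroup E] {r : ℕ → ℝ}
    (hr : Function.Injective r) : Pairwise (Function.onFun Disjoint fun k ↦ sphere (0 : E) (r k)) :=
  fun _ _ hne ↦ Set.disjoint_left.mpr fun _ h₁ h₂ ↦
    hne (hr ((mem_sphere_zero_iff_norm.mp h₁).symm.trans (mem_sphere_zero_iff_norm.mp h₂)))

theorem AddSubgroup.measureReal_eq_inv_index {G : Type*} [AddGroup G] [MeasurableSpace G]
    [MeasurableAdd G] (H : AddSubgroup G) [H.FiniteIndex] (hH : MeasurableSet (H : Set G))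
    (μ : Measure G) [IsProbabilityMeasure μ] [μ.IsAddLeftInvariant] :
    μ.real H = (H.index : ℝ)⁻¹ := by
  have h := congrArg ENNReal.toReal (H.index_mul_measure hH μ)
  rw [measure_univ, ENNReal.toReal_mul, ENNReal.toReal_natCast, ENNReal.toReal_one] at h
  rw [measureReal_def, eq_inv_of_mul_eq_one_right h]

def subAddMulHom {R : Type*} [CommRing R] (c : R) : R × R →+ R × R :=
  AddMonoidHom.mk' (fun z ↦ (z.1 - c * z.2, z.1 + c * z.2)) fun a b ↦ by
    ext <;> simp only [Prod.fst_add, Prod.snd_add] <;> ring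

theorem subAddMulHom_fst_mul_snd {R : Type*} [CommRing R] (c : R) (z : R × R) :
    (subAddMulHom c z).1 * (subAddMulHom c z).2 = z.1 ^ 2 - c * c * z.2 ^ 2 := by
  simp only [subAddMulHom, AddMonoidHom.mk'_apply]
  ring

theorem subAddMulHom_surjective {R : Type*} [CommRing R] {c : R} (h2 : IsUnit (2 : R))
    (hc : IsUnit c) : Function.Surjective (subAddMulHom c) := by
  intro w
  obtain ⟨a, ha⟩ := h2.exists_left_inv
  obtain ⟨b, hb⟩ := hc.exists_left_inv
  refine ⟨(a * (w.1 + w.2), a * b * (w.2 - w.1)), Prod.ext ?_ ?_⟩ <;>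
    simp only [subAddMulHom, AddMonoidHom.mk'_apply]
  · linear_combination w.1 * ha - a * (w.2 - w.1) * hb
  · linear_combination w.2 * ha + a * (w.2 - w.1) * hb

theorem continuous_subAddMulHom {R : Type*} [CommRing R] [TopologicalSpace R]
    [IsTopologicalRing R] (c : R) : Continuous (subAddMulHom c) :=
  (continuous_fst.sub (continuous_const.mul continuous_snd)).prodMk
    (continuous_fst.add (continuous_const.mul continuous_snd))

namespace PadicInt

theorem inv_prime_pow_injective : Function.Injective fun n : ℕ ↦ (p : ℝ)⁻¹ ^ n := by
  have hp := (Fact.out : p.Prime).one_lt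
  exact pow_right_injective₀ (by positivity) (inv_ne_one.mpr (by exact_mod_cast hp.ne'))

theorem inv_prime_pow_succ_le (n : ℕ) : (p : ℝ)⁻¹ ^ (n + 1) ≤ (p : ℝ)⁻¹ ^ n := by
  have hp := (Fact.out : p.Prime).one_lt
  exact pow_le_pow_of_le_one (by positivity) (inv_le_one_of_one_le₀ (by exact_mod_cast hp.le))
    n.le_succ

theorem norm_le_inv_pow_succ_iff (x : ℤ_[p]) (n : ℕ) :
    ‖x‖ ≤ (p : ℝ)⁻¹ ^ (n + 1) ↔ ‖x‖ < (p : ℝ)⁻¹ ^ n := by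
  have := norm_le_pow_iff_norm_lt_pow_add_one x (-((n + 1 : ℕ) : ℤ))
  rw [show -((n + 1 : ℕ) : ℤ) + 1 = -(n : ℤ) by push_cast; ring] at this
  simpa only [zpow_neg, zpow_natCast, inv_pow] using this

theorem norm_prod_le_inv_pow_succ_iff (z : ℤ_[p] × ℤ_[p]) (n : ℕ) :
    ‖z‖ ≤ (p : ℝ)⁻¹ ^ (n + 1) ↔ ‖z‖ < (p : ℝ)⁻¹ ^ n := by
  simp only [Prod.norm_def, max_le_iff, max_lt_iff, norm_le_inv_pow_succ_iff]

theorem norm_eq_inv_pow_valuation {x : ℤ_[p]} (hx : x ≠ 0) :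
    ‖x‖ = (p : ℝ)⁻¹ ^ x.valuation := by
  rw [norm_eq_zpow_neg_valuation hx, zpow_neg, zpow_natCast, inv_pow]

theorem exists_norm_prod_eq_inv_pow {z : ℤ_[p] × ℤ_[p]} (hz : z ≠ 0) :
    ∃ k : ℕ, ‖z‖ = (p : ℝ)⁻¹ ^ k := by
  have hz' : ‖z‖ ≠ 0 := norm_ne_zero_iff.mpr hz
  rcases max_choice ‖z.1‖ ‖z.2‖ with h | h <;> rw [← Prod.norm_def] at h <;> rw [h] at hz' ⊢ <;>
    exact ⟨_, norm_eq_inv_pow_valuation (norm_ne_zero_iff.mp hz')⟩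

theorem norm_two_of_ne_two (hp : p ≠ 2) : ‖(2 : ℤ_[p])‖ = 1 := by
  have := norm_natCast_eq_one_iff (p := p) (n := 2)
  rw [Nat.cast_ofNat] at this
  exact this.mpr ((Nat.coprime_primes Fact.out Nat.prime_two).mpr hp)

theorem norm_sq_sub_eq_one_of_not_isSquare (hp : p ≠ 2) {D : ℤ_[p]} (hD : ¬IsSquare D)
    (t : ℤ_[p]ˣ) : ‖(t : ℤ_[p]) ^ 2 - D‖ = 1 := by
  refine le_antisymm (norm_le_one _) (not_lt.mp fun hlt ↦ hD ?_)
  have hnorm : ‖(Polynomial.X ^ 2 - Polynomial.C D).aeval (t : ℤ_[p])‖ <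
      ‖(Polynomial.X ^ 2 - Polynomial.C D).derivative.aeval (t : ℤ_[p])‖ ^ 2 := by
    simpa [norm_mul, one_add_one_eq_two, norm_two_of_ne_two hp, norm_units] using hlt
  obtain ⟨z, hz, -⟩ := hensels_lemma hnorm
  exact ⟨z, (by simpa [sub_eq_zero, sq] using hz : z * z = D).symm⟩

theorem norm_sq_sub_mul_sq_of_not_isSquare (hp : p ≠ 2) {D : ℤ_[p]} (hD : IsUnit D)
    (hns : ¬IsSquare D) (x y : ℤ_[p]) : ‖x ^ 2 - D * y ^ 2‖ = max ‖x‖ ‖y‖ ^ 2 := by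
  have hDn : ‖D‖ = 1 := isUnit_iff.mp hD
  by_cases hxy : ‖x‖ = ‖y‖
  · rw [hxy, max_self]
    rcases eq_or_ne y 0 with rfl | hy
    · rw [norm_zero, norm_eq_zero] at hxy
      simp [hxy]
    have hx : x ≠ 0 := norm_ne_zero_iff.mp (hxy ▸ norm_ne_zero_iff.mpr hy)
    have hv : x.valuation = y.valuation := inv_prime_pow_injective
      ((norm_eq_inv_pow_valuation hx).symm.trans (hxy.trans (norm_eq_inv_pow_valuation hy)))
    set u := unitCoeff hx
    set w := unitCoeff hy
    have key : x ^ 2 - D * y ^ 2 = y ^ 2 * (((u * w⁻¹ : ℤ_[p]ˣ) : ℤ_[p]) ^ 2 - D) := by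
      rw [Units.val_mul, unitCoeff_spec hx, unitCoeff_spec hy, hv]
      linear_combination (-(u : ℤ_[p]) ^ 2 * (p : ℤ_[p]) ^ (2 * y.valuation) *
        ((w : ℤ_[p]) * ((w⁻¹ : ℤ_[p]ˣ) : ℤ_[p]) + 1)) * w.mul_inv
    rw [key, norm_mul, norm_pow, norm_sq_sub_eq_one_of_not_isSquare hp hns, mul_one]
  · have hne : ‖x ^ 2‖ ≠ ‖-(D * y ^ 2)‖ := by
      rw [norm_neg, norm_mul, hDn, one_mul, norm_pow, norm_pow]
      exact fun h ↦ hxy ((sq_eq_sq₀ (norm_nonneg _) (norm_nonneg _)).mp h)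
    rw [sub_eq_add_neg, IsUltrametricDist.norm_add_eq_max_of_norm_ne_norm hne, norm_neg, norm_mul,
      hDn, one_mul, norm_pow, norm_pow]
    rcases le_total ‖x‖ ‖y‖ with h | h
    · rw [max_eq_right h, max_eq_right (pow_le_pow_left₀ (norm_nonneg _) h 2)]
    · rw [max_eq_left h, max_eq_left (pow_le_pow_left₀ (norm_nonneg _) h 2)]

theorem closedBall_eq_span_pow (n : ℕ) :
    closedBall (0 : ℤ_[p]) ((p : ℝ)⁻¹ ^ n) = (Ideal.span {(p : ℤ_[p]) ^ n} : Set ℤ_[p]) := by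
  ext x
  rw [mem_closedBall_zero_iff, inv_pow, ← zpow_natCast, ← zpow_neg, SetLike.mem_coe]
  exact norm_le_pow_iff_mem_span_pow x n

theorem index_span_pow (n : ℕ) :
    (Ideal.span {(p : ℤ_[p]) ^ n}).toAddSubgroup.index = p ^ n := by
  have := AddSubgroup.index_ker (toZModPow n : ℤ_[p] →+* ZMod (p ^ n)).toAddMonoidHom
  rw [AddMonoidHom.range_eq_top.mpr (ZMod.ringHom_surjective _)] at this
  rw [← ker_toZModPow]
  exact this.trans (by simp)

section Haar

variable (μ : Measure (ℤ_[p] × ℤ_[p])) [IsProbabilityMeasure μ] [μ.IsAddLeftInvariant]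

theorem measureReal_closedBall_prod (i j : ℕ) :
    μ.real (closedBall 0 ((p : ℝ)⁻¹ ^ i) ×ˢ closedBall 0 ((p : ℝ)⁻¹ ^ j)) =
      (p : ℝ)⁻¹ ^ i * (p : ℝ)⁻¹ ^ j := by
  set H := (Ideal.span {(p : ℤ_[p]) ^ i}).toAddSubgroup.prod
    (Ideal.span {(p : ℤ_[p]) ^ j}).toAddSubgroup
  have hH : (H : Set (ℤ_[p] × ℤ_[p])) =
      closedBall 0 ((p : ℝ)⁻¹ ^ i) ×ˢ closedBall 0 ((p : ℝ)⁻¹ ^ j) := by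
    simp only [H, closedBall_eq_span_pow, AddSubgroup.coe_prod, Submodule.coe_toAddSubgroup]
  have hindex : H.index = p ^ i * p ^ j := by
    rw [AddSubgroup.index_prod, index_span_pow, index_span_pow]
  have : H.FiniteIndex := ⟨by have := (Fact.out : p.Prime).pos; rw [hindex]; positivity⟩
  have hmeas : MeasurableSet (H : Set (ℤ_[p] × ℤ_[p])) :=
    hH ▸ (isClosed_closedBall.prod isClosed_closedBall).measurableSet
  rw [← hH, H.measureReal_eq_inv_index hmeas, hindex]
  push_cast
  rw [inv_pow, inv_pow, _root_.mul_inv]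

theorem measureReal_sphere_prod_closedBall (i j : ℕ) :
    μ.real (sphere 0 ((p : ℝ)⁻¹ ^ i) ×ˢ closedBall 0 ((p : ℝ)⁻¹ ^ j)) =
      ((p : ℝ)⁻¹ ^ i - (p : ℝ)⁻¹ ^ (i + 1)) * (p : ℝ)⁻¹ ^ j := by
  have hset : sphere (0 : ℤ_[p]) ((p : ℝ)⁻¹ ^ i) ×ˢ closedBall (0 : ℤ_[p]) ((p : ℝ)⁻¹ ^ j) =
      closedBall 0 ((p : ℝ)⁻¹ ^ i) ×ˢ closedBall 0 ((p : ℝ)⁻¹ ^ j) \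
        closedBall 0 ((p : ℝ)⁻¹ ^ (i + 1)) ×ˢ closedBall 0 ((p : ℝ)⁻¹ ^ j) := by
    rw [sphere_zero_eq_closedBall_sdiff (norm_le_inv_pow_succ_iff · i)]
    ext
    simp only [Set.mem_prod, Set.mem_sdiff]
    tauto
  rw [hset, measureReal_sdiff (Set.prod_mono_left (closedBall_subset_closedBall
      (inv_prime_pow_succ_le i))) (isClosed_closedBall.prod isClosed_closedBall).measurableSet,
    measureReal_closedBall_prod, measureReal_closedBall_prod, sub_mul]

theorem measureReal_sphere_prod_sphere (i j : ℕ) :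
    μ.real (sphere 0 ((p : ℝ)⁻¹ ^ i) ×ˢ sphere 0 ((p : ℝ)⁻¹ ^ j)) =
      ((p : ℝ)⁻¹ ^ i - (p : ℝ)⁻¹ ^ (i + 1)) * ((p : ℝ)⁻¹ ^ j - (p : ℝ)⁻¹ ^ (j + 1)) := by
  have hset : sphere (0 : ℤ_[p]) ((p : ℝ)⁻¹ ^ i) ×ˢ sphere (0 : ℤ_[p]) ((p : ℝ)⁻¹ ^ j) =
      sphere 0 ((p : ℝ)⁻¹ ^ i) ×ˢ closedBall 0 ((p : ℝ)⁻¹ ^ j) \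
        sphere 0 ((p : ℝ)⁻¹ ^ i) ×ˢ closedBall 0 ((p : ℝ)⁻¹ ^ (j + 1)) := by
    rw [sphere_zero_eq_closedBall_sdiff (norm_le_inv_pow_succ_iff · j)]
    ext
    simp only [Set.mem_prod, Set.mem_sdiff]
    tauto
  rw [hset, measureReal_sdiff (Set.prod_mono_right (closedBall_subset_closedBall
      (inv_prime_pow_succ_le j))) (isClosed_sphere.prod isClosed_closedBall).measurableSet,
    measureReal_sphere_prod_closedBall, measureReal_sphere_prod_closedBall, mul_sub]

theorem measureReal_sphere (k : ℕ) :
    μ.real (sphere (0 : ℤ_[p] × ℤ_[p]) ((p : ℝ)⁻¹ ^ k)) =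
      ((p : ℝ)⁻¹ ^ 2) ^ k - ((p : ℝ)⁻¹ ^ 2) ^ (k + 1) := by
  rw [sphere_zero_eq_closedBall_sdiff (norm_prod_le_inv_pow_succ_iff · k), ← Prod.mk_zero_zero,
    ← closedBall_prod_same, ← closedBall_prod_same, measureReal_sdiff
      (Set.prod_mono (closedBall_subset_closedBall (inv_prime_pow_succ_le k))
        (closedBall_subset_closedBall (inv_prime_pow_succ_le k)))
      (isClosed_closedBall.prod isClosed_closedBall).measurableSet,
    measureReal_closedBall_prod, measureReal_closedBall_prod]
  ring

theorem integral_norm_mul_rpow {s : ℝ} (hs : 0 < s) :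
    ∫ w, ‖w.1 * w.2‖ ^ s ∂μ = ((1 - (p : ℝ)⁻¹) / (1 - (p : ℝ)⁻¹ ^ (1 + s))) ^ 2 := by
  have hp := (Fact.out : p.Prime).one_lt
  have hq0 : 0 ≤ (p : ℝ)⁻¹ := by positivity
  have hq : (p : ℝ)⁻¹ < 1 := inv_lt_one_of_one_lt₀ (by exact_mod_cast hp)
  have hg := hasSum_pow_sub_pow_succ_mul_rpow (s := s) (by positivity) hq (by linarith)
  have hcont : Continuous fun w : ℤ_[p] × ℤ_[p] ↦ ‖w.1 * w.2‖ ^ s :=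
    (by fun_prop : Continuous fun w : ℤ_[p] × ℤ_[p] ↦ ‖w.1 * w.2‖).rpow_const
      fun _ ↦ Or.inr hs.le
  rw [integral_eq_tsum_of_eqOn (hcont.integrable_of_hasCompactSupport (.of_compactSpace _))
    (A := fun ij : ℕ × ℕ ↦ sphere 0 ((p : ℝ)⁻¹ ^ ij.1) ×ˢ sphere 0 ((p : ℝ)⁻¹ ^ ij.2))
    (c := fun ij ↦ ((p : ℝ)⁻¹ ^ ij.1 * (p : ℝ)⁻¹ ^ ij.2) ^ s)]
  · have hgn := hg.summable.norm
    simp_rw [measureReal_sphere_prod_sphere,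
      Real.mul_rpow (pow_nonneg hq0 _) (pow_nonneg hq0 _)]
    rw [← hg.tsum_eq, sq, tsum_mul_tsum_of_summable_norm hgn hgn]
    exact tsum_congr fun _ ↦ by ring
  · exact fun _ ↦ (isClosed_sphere.prod isClosed_sphere).measurableSet
  · rintro ⟨i, j⟩ ⟨k, l⟩ hne
    refine Set.disjoint_prod.mpr ?_
    by_cases hik : i = k
    · exact .inr (pairwise_disjoint_sphere inv_prime_pow_injective fun hjl ↦
        hne (Prod.ext hik hjl))
    · exact .inl (pairwise_disjoint_sphere inv_prime_pow_injective hik)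
  · rintro ⟨i, j⟩ w ⟨hw₁, hw₂⟩
    simp only [norm_mul, mem_sphere_zero_iff_norm.mp hw₁, mem_sphere_zero_iff_norm.mp hw₂]
  · intro w hw
    have hw0 : w.1 * w.2 = 0 := by
      by_contra h
      obtain ⟨h₁, h₂⟩ := mul_ne_zero_iff.mp h
      exact hw (Set.mem_iUnion.mpr ⟨(w.1.valuation, w.2.valuation),
        mem_sphere_zero_iff_norm.mpr (norm_eq_inv_pow_valuation h₁),
        mem_sphere_zero_iff_norm.mpr (norm_eq_inv_pow_valuation h₂)⟩)
    rw [hw0, norm_zero, Real.zero_rpow hs.ne']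

theorem integral_norm_sq_rpow {s : ℝ} (hs : 0 < s) :
    ∫ w, (‖w‖ ^ 2) ^ s ∂μ = (1 - (p : ℝ)⁻¹ ^ 2) / (1 - ((p : ℝ)⁻¹ ^ (1 + s)) ^ 2) := by
  have hp := (Fact.out : p.Prime).one_lt
  have hq : (p : ℝ)⁻¹ ^ 2 < 1 :=
    pow_lt_one₀ (by positivity) (inv_lt_one_of_one_lt₀ (by exact_mod_cast hp)) two_ne_zero
  have hcont : Continuous fun w : ℤ_[p] × ℤ_[p] ↦ (‖w‖ ^ 2) ^ s :=
    (by fun_prop : Continuous fun w : ℤ_[p] × ℤ_[p] ↦ ‖w‖ ^ 2).rpow_const fun _ ↦ Or.inr hs.le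
  rw [integral_eq_tsum_of_eqOn (hcont.integrable_of_hasCompactSupport (.of_compactSpace _))
    (A := fun k : ℕ ↦ sphere 0 ((p : ℝ)⁻¹ ^ k)) (c := fun k ↦ (((p : ℝ)⁻¹ ^ 2) ^ k) ^ s)]
  · simp_rw [measureReal_sphere]
    rw [Real.rpow_pow_comm (by positivity)]
    exact (hasSum_pow_sub_pow_succ_mul_rpow (s := s) (by positivity) hq (by linarith)).tsum_eq
  · exact fun _ ↦ isClosed_sphere.measurableSet
  · exact pairwise_disjoint_sphere inv_prime_pow_injective
  · intro k w hw
    simp only [mem_sphere_zero_iff_norm.mp hw, ← pow_mul, mul_comm]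
  · intro w hw
    have hw0 : w = 0 := by
      by_contra h
      obtain ⟨k, hk⟩ := exists_norm_prod_eq_inv_pow h
      exact hw (Set.mem_iUnion.mpr ⟨k, mem_sphere_zero_iff_norm.mpr hk⟩)
    rw [hw0, norm_zero, zero_pow two_ne_zero, Real.zero_rpow hs.ne']

theorem integral_norm_sq_sub_mul_sq_rpow_of_isSquare {s : ℝ} (hs : 0 < s) (hp : p ≠ 2)
    {c : ℤ_[p]} (hc : IsUnit c) :
    ∫ z, ‖z.1 ^ 2 - c * c * z.2 ^ 2‖ ^ s ∂μ =
      ((1 - (p : ℝ)⁻¹) / (1 - (p : ℝ)⁻¹ ^ (1 + s))) ^ 2 := by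
  have hf := continuous_subAddMulHom c
  have : IsProbabilityMeasure (μ.map (subAddMulHom c)) :=
    Measure.isProbabilityMeasure_map hf.aemeasurable
  have : (μ.map (subAddMulHom c)).IsAddLeftInvariant := isAddLeftInvariant_map
    (subAddMulHom c).toAddHom hf.measurable
    (subAddMulHom_surjective (isUnit_iff.mpr (norm_two_of_ne_two hp)) hc)
  rw [← integral_norm_mul_rpow (μ.map (subAddMulHom c)) hs, integral_map hf.aemeasurable]
  · simp_rw [subAddMulHom_fst_mul_snd]
  · exact ((by fun_prop : Continuous fun w : ℤ_[p] × ℤ_[p] ↦ ‖w.1 * w.2‖).rpow_const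
      fun _ ↦ Or.inr hs.le).aestronglyMeasurable

theorem integral_norm_sq_sub_mul_sq_rpow_of_not_isSquare {s : ℝ} (hs : 0 < s) (hp : p ≠ 2)
    {D : ℤ_[p]} (hD : IsUnit D) (hns : ¬IsSquare D) :
    ∫ z, ‖z.1 ^ 2 - D * z.2 ^ 2‖ ^ s ∂μ =
      (1 - (p : ℝ)⁻¹ ^ 2) / (1 - ((p : ℝ)⁻¹ ^ (1 + s)) ^ 2) := by
  simp_rw [norm_sq_sub_mul_sq_of_not_isSquare hp hD hns, ← Prod.norm_def]
  exact integral_norm_sq_rpow μ hs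

end Haar
end PadicInt

/-- For an odd prime `p` and a unit `D ∈ ℤ_p^×`, Igusa's local zeta function of
`f(x₁,x₂) = x₁² − D x₂²` equals
`((1-p⁻¹)/(1-p^{-1-s})) · ((1 − χ p⁻¹)/(1 − χ p^{-1-s}))`, where `χ = 1` if `D` is a
square and `χ = −1` otherwise. -/
theorem igusa_zeta_binary_form (hp : p ≠ 2) (D : ℤ_[p]) (hD : IsUnit D)
    (μ : Measure (ℤ_[p] × ℤ_[p])) [IsProbabilityMeasure μ] [μ.IsAddLeftInvariant]
    (s : ℝ) (hs : 0 < s) :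
    (∫ z : ℤ_[p] × ℤ_[p], ‖z.1 ^ 2 - D * z.2 ^ 2‖ ^ s ∂μ) =
      ((1 - (p : ℝ)⁻¹) / (1 - (p : ℝ) ^ (-1 - s))) *
        ((1 - (if IsSquare D then (1 : ℝ) else -1) * (p : ℝ)⁻¹) /
          (1 - (if IsSquare D then (1 : ℝ) else -1) * (p : ℝ) ^ (-1 - s))) := by
  have ht : (p : ℝ) ^ (-1 - s) = (p : ℝ)⁻¹ ^ (1 + s) := by
    rw [Real.inv_rpow p.cast_nonneg, ← Real.rpow_neg p.cast_nonneg, neg_add']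
  rw [ht]
  by_cases hsq : IsSquare D
  · obtain ⟨c, rfl⟩ := hsq
    rw [PadicInt.integral_norm_sq_sub_mul_sq_rpow_of_isSquare μ hs hp
      (isUnit_of_mul_isUnit_left hD), if_pos ⟨c, rfl⟩, one_mul, one_mul, sq]
  · rw [PadicInt.integral_norm_sq_sub_mul_sq_rpow_of_not_isSquare μ hs hp hD hsq, if_neg hsq,
      div_mul_div_comm]
    congr 1 <;> ring
end
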